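/- arXiv:nlin/0106015 — 3 statements merged into one kernel-verified Lean document; each statement's English description precedes it below -/
import Mathlib

section
/- Let v(q) = sinh(νq/2 + γ)/sinh(νq/2), and let q_1, ..., q_M be real numbers with all differences q_i - q_k (i ≠ k) nonzero modulo the period. Then Σ_{i=1}^{M} Π_{k≠i} v(q_i - q_k) = sinh(γ M)/sinh(γ). -/
open Finset Polynomial Lagrange

lemma csinh_eq (z : ℂ) : Complex.sinh z = (Complex.exp z - Complex.exp (-z)) / 2 := rfl

lemma coeff_basis' {F : Type*} [Field F] {ι : Type*} [DecidableEq ι]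
    {s : Finset ι} {v : ι → F} {i : ι} (hi : i ∈ s) :
    (Lagrange.basis s v i).coeff (#s - 1) = nodalWeight s v i := by
  rw [basis_eq_prod_sub_inv_mul_nodal_div hi, ← nodal_erase_eq_nodal_div hi, coeff_C_mul]
  have hmon : (nodal (s.erase i) v).Monic := nodal_monic
  have hdeg : (nodal (s.erase i) v).natDegree = #s - 1 := by
    rw [natDegree_nodal, card_erase_of_mem hi]
  rw [← hdeg, hmon.coeff_natDegree, mul_one]

lemma coeff_eq_sum_nodalWeight {F : Type*} [Field F] {ι : Type*} [DecidableEq ι]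
    {s : Finset ι} {v : ι → F} (hvs : Set.InjOn v s)
    {f : F[X]} (hf : f.degree < #s) :
    f.coeff (#s - 1) = ∑ i ∈ s, f.eval (v i) * nodalWeight s v i := by
  conv_lhs => rw [Lagrange.eq_interpolate hvs hf, interpolate_apply]
  rw [finset_sum_coeff]
  refine Finset.sum_congr rfl fun i hi => ?_
  rw [coeff_C_mul, coeff_basis' hi]

lemma key_sum {F : Type*} [Field F] {M : ℕ} (μ : F) (hμ : μ ≠ 0) (hμ2 : μ - μ⁻¹ ≠ 0)
    (t : Fin M → F) (ht0 : ∀ i, t i ≠ 0) (htinj : Function.Injective t) :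
    ∑ i : Fin M, ∏ k ∈ univ.erase i, (μ * t i - μ⁻¹ * t k) / (t i - t k)
      = (μ ^ M - μ⁻¹ ^ M) / (μ - μ⁻¹) := by
  classical
  set v : Option (Fin M) → F := fun o => o.elim 0 t with hv
  have hsi : Function.Injective (Option.some (α := Fin M)) := Option.some_injective _
  set s : Finset (Option (Fin M)) := insert none ((univ : Finset (Fin M)).image some) with hs
  have hnone : (none : Option (Fin M)) ∉ (univ : Finset (Fin M)).image some := by simp
  have hcard : #s = M + 1 := by
    rw [hs, card_insert_of_notMem hnone, card_image_of_injective _ hsi, card_univ,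
      Fintype.card_fin]
  have htd : ∀ i k : Fin M, i ≠ k → t i - t k ≠ 0 := fun i k h =>
    sub_ne_zero_of_ne (fun e => h (htinj e))
  have hvs : Set.InjOn v s := by
    intro a _ b _ hab
    match a, b with
    | none, none => rfl
    | none, some j => exact absurd hab.symm (ht0 j)
    | some j, none => exact absurd hab (ht0 j)
    | some j, some k => exact congrArg _ (htinj hab)
  set f : F[X] := C (μ ^ M) * nodal (univ : Finset (Fin M)) (fun k => μ⁻¹ * μ⁻¹ * t k) with hf
  have heval : ∀ x : F, f.eval x = ∏ k : Fin M, (μ * x - μ⁻¹ * t k) := by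
    intro x
    rw [hf, eval_mul, eval_C, eval_nodal]
    have hpc : μ ^ M = ∏ _k : Fin M, μ := by rw [prod_const, card_univ, Fintype.card_fin]
    rw [hpc, ← prod_mul_distrib]
    exact Finset.prod_congr rfl fun k _ => by field_simp
  have hdegf : f.degree < (#s : ℕ) := by
    calc f.degree ≤ (C (μ ^ M)).degree + (nodal univ _).degree := degree_mul_le _ _
    _ ≤ 0 + (M : WithBot ℕ) := by
        gcongr
        · exact degree_C_le
        · rw [degree_nodal, card_univ, Fintype.card_fin]
    _ < (#s : ℕ) := by rw [hcard, zero_add]; exact_mod_cast Nat.lt_succ_self M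
  have hcoeff : f.coeff (#s - 1) = μ ^ M := by
    rw [hcard, Nat.add_sub_cancel, hf, coeff_C_mul]
    have hmon : (nodal (univ : Finset (Fin M)) (fun k => μ⁻¹ * μ⁻¹ * t k)).Monic := nodal_monic
    have hnd : (nodal (univ : Finset (Fin M)) (fun k => μ⁻¹ * μ⁻¹ * t k)).natDegree = M := by
      rw [natDegree_nodal, card_univ, Fintype.card_fin]
    have h1 := hmon.coeff_natDegree
    rw [hnd] at h1
    rw [h1, mul_one]
  have hmain := coeff_eq_sum_nodalWeight hvs hdegf
  rw [hcoeff] at hmain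
  rw [hs, Finset.sum_insert hnone, Finset.sum_image (fun a _ b _ h => hsi h), ← hs] at hmain
  -- the `none` term
  have hterm0 : f.eval (v none) * nodalWeight s v none = μ⁻¹ ^ M := by
    have h1 : s.erase none = (univ : Finset (Fin M)).image some := by
      rw [hs, Finset.erase_insert hnone]
    rw [nodalWeight, h1, Finset.prod_image (fun a _ b _ h => hsi h)]
    show f.eval 0 * (∏ k : Fin M, ((0:F) - t k)⁻¹) = μ⁻¹ ^ M
    rw [heval 0, ← prod_mul_distrib]
    have hpc : μ⁻¹ ^ M = ∏ _k : Fin M, μ⁻¹ := by rw [prod_const, card_univ, Fintype.card_fin]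
    rw [hpc]
    refine Finset.prod_congr rfl fun k _ => ?_
    have := ht0 k
    field_simp
    ring
  -- the `some` terms
  have hterm : ∀ i : Fin M, f.eval (v (some i)) * nodalWeight s v (some i)
      = (μ - μ⁻¹) * ∏ k ∈ univ.erase i, (μ * t i - μ⁻¹ * t k) / (t i - t k) := by
    intro i
    have h1 : s.erase (some i) = insert none (((univ : Finset (Fin M)).erase i).image some) := by
      rw [hs, Finset.erase_insert_of_ne (by simp), Finset.image_erase hsi]
    have h2 : (none : Option (Fin M)) ∉ ((univ : Finset (Fin M)).erase i).image some := by simp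
    rw [nodalWeight, h1, Finset.prod_insert h2, Finset.prod_image (fun a _ b _ h => hsi h)]
    show f.eval (t i) * ((t i - 0)⁻¹ * ∏ k ∈ univ.erase i, (t i - t k)⁻¹) = _
    rw [heval (t i), ← Finset.mul_prod_erase _ _ (Finset.mem_univ i), sub_zero]
    have hB : (∏ k ∈ univ.erase i, (t i - t k)) ≠ 0 :=
      prod_ne_zero_iff.mpr fun k hk => htd i k (Finset.mem_erase.mp hk).1.symm
    rw [prod_div_distrib, prod_inv_distrib]
    have hti := ht0 i
    field_simp
  rw [hterm0] at hmain
  have hsum : ∑ i : Fin M, f.eval (v (some i)) * nodalWeight s v (some i)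
      = (μ - μ⁻¹) * ∑ i : Fin M, ∏ k ∈ univ.erase i, (μ * t i - μ⁻¹ * t k) / (t i - t k) := by
    rw [mul_sum]; exact Finset.sum_congr rfl fun i _ => hterm i
  rw [hsum] at hmain
  rw [eq_div_iff hμ2]
  linear_combination -hmain

/-- Liouville-type functional identity:
`∑_{i=1}^{M} ∏_{k≠i} v(q_i - q_k) = sinh(γ M)/sinh γ`
where `v(q) = sinh(νq/2 + γ)/sinh(νq/2)`. -/
theorem stmt_0 (γ ν : ℂ) (M : ℕ) (hM : 0 < M) (q : Fin M → ℂ)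
    (hγ : Complex.sinh γ ≠ 0)
    (hq : ∀ i k : Fin M, i ≠ k → Complex.sinh (ν * (q i - q k) / 2) ≠ 0) :
    ∑ i : Fin M, ∏ k ∈ univ.erase i,
        Complex.sinh (ν * (q i - q k) / 2 + γ) / Complex.sinh (ν * (q i - q k) / 2)
      = Complex.sinh (γ * M) / Complex.sinh γ := by
  set μ : ℂ := Complex.exp γ with hμdef
  set t : Fin M → ℂ := fun i => Complex.exp (ν * q i) with htdef
  have hμ : μ ≠ 0 := Complex.exp_ne_zero γ
  have hinv : μ⁻¹ = Complex.exp (-γ) := by rw [hμdef, ← Complex.exp_neg]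
  have hμ2 : μ - μ⁻¹ = 2 * Complex.sinh γ := by rw [hinv, hμdef, csinh_eq]; ring
  have hμ2' : μ - μ⁻¹ ≠ 0 := by rw [hμ2]; exact mul_ne_zero two_ne_zero hγ
  have hfac : ∀ i k : Fin M, t i - t k
      = Complex.exp (ν * (q i + q k) / 2) * (2 * Complex.sinh (ν * (q i - q k) / 2)) := by
    intro i k
    rw [csinh_eq]
    rw [show Complex.exp (ν*(q i + q k)/2) *
        (2 * ((Complex.exp (ν*(q i - q k)/2) - Complex.exp (-(ν*(q i - q k)/2)))/2))
      = Complex.exp (ν*(q i+q k)/2) * Complex.exp (ν*(q i-q k)/2)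
        - Complex.exp (ν*(q i+q k)/2) * Complex.exp (-(ν*(q i-q k)/2)) from by ring]
    rw [← Complex.exp_add, ← Complex.exp_add, htdef]
    show Complex.exp (ν * q i) - Complex.exp (ν * q k) = _
    congr 2 <;> ring
  have hfac2 : ∀ i k : Fin M, μ * t i - μ⁻¹ * t k
      = Complex.exp (ν * (q i + q k) / 2) * (2 * Complex.sinh (ν * (q i - q k) / 2 + γ)) := by
    intro i k
    have e1 : μ * t i = Complex.exp (ν*(q i+q k)/2) * Complex.exp (ν*(q i-q k)/2 + γ) := by
      rw [hμdef, htdef, ← Complex.exp_add, ← Complex.exp_add]; congr 1; ring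
    have e2 : μ⁻¹ * t k = Complex.exp (ν*(q i+q k)/2) * Complex.exp (-(ν*(q i-q k)/2 + γ)) := by
      rw [hinv, htdef, ← Complex.exp_add, ← Complex.exp_add]; congr 1; ring
    rw [e1, e2, csinh_eq]; ring
  have htd : ∀ i k : Fin M, i ≠ k → t i - t k ≠ 0 := by
    intro i k h
    rw [hfac i k]
    exact mul_ne_zero (Complex.exp_ne_zero _) (mul_ne_zero two_ne_zero (hq i k h))
  have ht0 : ∀ i, t i ≠ 0 := fun i => Complex.exp_ne_zero _
  have htinj : Function.Injective t := by
    intro i k h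
    by_contra hik
    exact htd i k hik (sub_eq_zero.mpr h)
  have hsummand : ∀ i k : Fin M, i ≠ k →
      Complex.sinh (ν * (q i - q k) / 2 + γ) / Complex.sinh (ν * (q i - q k) / 2)
        = (μ * t i - μ⁻¹ * t k) / (t i - t k) := by
    intro i k hik
    rw [hfac i k, hfac2 i k, mul_div_mul_left _ _ (Complex.exp_ne_zero _),
      mul_div_mul_left _ _ (two_ne_zero)]
  calc ∑ i : Fin M, ∏ k ∈ univ.erase i,
        Complex.sinh (ν * (q i - q k) / 2 + γ) / Complex.sinh (ν * (q i - q k) / 2)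
      = ∑ i : Fin M, ∏ k ∈ univ.erase i, (μ * t i - μ⁻¹ * t k) / (t i - t k) :=
        Finset.sum_congr rfl fun i _ => Finset.prod_congr rfl fun k hk =>
          hsummand i k (Finset.mem_erase.mp hk).1.symm
    _ = (μ ^ M - μ⁻¹ ^ M) / (μ - μ⁻¹) := key_sum μ hμ hμ2' t ht0 htinj
    _ = Complex.sinh (γ * M) / Complex.sinh γ := by
        have hM1 : μ ^ M = Complex.exp (γ * M) := by
          rw [hμdef, ← Complex.exp_nat_mul]; congr 1; ring
        have hM2 : μ⁻¹ ^ M = Complex.exp (-(γ * M)) := by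
          rw [hinv, ← Complex.exp_nat_mul]; congr 1; ring
        rw [hM1, hM2, show Complex.exp (γ*M) - Complex.exp (-(γ*M))
          = 2 * Complex.sinh (γ*M) from by rw [csinh_eq]; ring, hμ2,
          mul_div_mul_left _ _ (two_ne_zero)]
end

section
/- Product formula for principal minors of the A_{2N} Ruijsenaars–Schneider Lax matrix: for the matrix ℒ with entries ℒ_{ij} = c(q_i − q_j) e^{−βθ_j} Π_{k≠j} f^{1/2}(q_j − q_k) (indices in {−N,...,N}), where c(q) = sinh γ / sinh(νq/2 + γ) and f(q) = 1 − sinh²γ/sinh²(νq/2), every principal minor indexed by a subset 𝒥 ⊂ {−N,...,N} equals m_𝒥(ℒ) = e^{−β Σ_{j∈𝒥} θ_j} · Π_{j∈𝒥, k∉𝒥} f^{1/2}(q_j − q_k). -/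
open Finset

namespace RSHelpers

open Matrix Complex


theorem cauchy_det_aux : ∀ (n : ℕ) (x y : Fin n → ℂ), (∀ i j, x i - y j ≠ 0) →
    Matrix.det (Matrix.of fun i j => (x i - y j)⁻¹)
      = (∏ i, ∏ j ∈ Ioi i, (x i - x j) * (y j - y i)) / ∏ i, ∏ j, (x i - y j) := by
  intro n
  induction n with
  | zero => intro x y h; simp [Matrix.det_eq_one_of_card_eq_zero (Fintype.card_fin 0)]
  | succ n ih =>
    intro x y h
    have h' : ∀ i j : Fin n, x i.succ - y j.succ ≠ 0 := fun i j => h _ _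
    set B : Matrix (Fin (n+1)) (Fin (n+1)) ℂ := Matrix.of fun i j =>
      (Fin.cons ((x 0 - y j)⁻¹)
        (fun i : Fin n => (x 0 - x i.succ) * ((x 0 - y j)⁻¹ * (x i.succ - y j)⁻¹)) :
        Fin (n+1) → ℂ) i with hB
    set E : Matrix (Fin (n+1)) (Fin (n+1)) ℂ := Matrix.of
      (Fin.cons (fun _ => (1:ℂ)) (fun i j => (x i.succ - y j)⁻¹)) with hE
    set F : Matrix (Fin (n+1)) (Fin (n+1)) ℂ := Matrix.of fun i j =>
      (Fin.cons ((Fin.cons (1:ℂ) (fun _ => 0) : Fin (n+1) → ℂ) j)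
        (fun i => (Fin.cons (1:ℂ) (fun j => (x i.succ - y j.succ)⁻¹) : Fin (n+1) → ℂ) j) :
        Fin (n+1) → ℂ) i with hF
    set M1 : Matrix (Fin (n+1)) (Fin (n+1)) ℂ :=
      Matrix.of (fun i j : Fin (n+1) => (x 0 - y j)⁻¹ * E i j) with hM1
    set M2 : Matrix (Fin (n+1)) (Fin (n+1)) ℂ := Matrix.of (fun i j : Fin (n+1) =>
      (Fin.cons 1 (fun j => y j.succ - y 0) : Fin (n+1) → ℂ) j * F i j) with hM2
    -- Step 1: subtract row 0 from the other rows
    have step1 : Matrix.det (Matrix.of fun i j => (x i - y j)⁻¹) = Matrix.det B := by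
      refine Matrix.det_eq_of_forall_row_eq_smul_add_const (Fin.cons 0 1) 0 (Fin.cons_zero _ _) ?_
      intro i j
      refine Fin.cases ?_ (fun i => ?_) i
      · simp [hB]
      · simp only [hB, Matrix.of_apply, Fin.cons_succ, Fin.cons_zero, Pi.one_apply, one_mul]
        have h1 := h 0 j
        have h2 := h i.succ j
        field_simp
        ring
    -- Step 2: factor out row factors and column factors
    have step2 : Matrix.det B
        = (∏ i : Fin n, (x 0 - x i.succ)) * ((∏ j : Fin (n+1), (x 0 - y j)⁻¹) *
            Matrix.det E) := by
      have hBM : B = Matrix.of (fun i j : Fin (n+1) =>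
          (Fin.cons 1 (fun i => x 0 - x i.succ) : Fin (n+1) → ℂ) i * M1 i j) := by
        ext i j
        refine Fin.cases ?_ (fun i => ?_) i <;> simp [hB, hM1, hE]
      rw [hBM, Matrix.det_mul_column (Fin.cons 1 fun i => x 0 - x i.succ) M1, hM1,
        Matrix.det_mul_row (fun j => (x 0 - y j)⁻¹) E, Fin.prod_cons]
      ring
    -- Step 3: subtract column 0 from the other columns, and factor
    have step3 : Matrix.det E
        = (∏ i : Fin n, (x i.succ - y 0)⁻¹) * ((∏ j : Fin n, (y j.succ - y 0)) *
            Matrix.det F) := by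
      set M3 : Matrix (Fin (n+1)) (Fin (n+1)) ℂ := Matrix.of (fun i j : Fin (n+1) =>
        (Fin.cons 1 (fun i => (x i.succ - y 0)⁻¹) : Fin (n+1) → ℂ) i * M2 i j) with hM3
      have colop' : Matrix.det (Eᵀ) = Matrix.det (M3ᵀ) := by
        refine Matrix.det_eq_of_forall_row_eq_smul_add_const (Fin.cons 0 1) 0 (Fin.cons_zero _ _) ?_
        intro j i
        simp only [Matrix.transpose_apply]
        refine Fin.cases ?_ (fun j => ?_) j <;> refine Fin.cases ?_ (fun i => ?_) i
        · simp [hE, hF, hM3, hM2]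
        · simp [hE, hF, hM3, hM2]
        · simp [hE, hF, hM3, hM2]
        · simp only [hE, hF, hM3, hM2, Matrix.of_apply, Fin.cons_succ, Fin.cons_zero,
            Pi.one_apply, one_mul]
          have h1 := h i.succ 0
          have h2 := h i.succ j.succ
          field_simp
          ring
      have colop : Matrix.det E = Matrix.det M3 := by
        rw [← Matrix.det_transpose E, colop', Matrix.det_transpose]
      rw [colop, hM3, Matrix.det_mul_column (Fin.cons 1 fun i => (x i.succ - y 0)⁻¹) M2, hM2,
        Matrix.det_mul_row (Fin.cons 1 fun j => y j.succ - y 0) F, Fin.prod_cons, Fin.prod_cons]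
      ring
    -- Step 4: expand along the first row
    have step4 : Matrix.det F
        = Matrix.det (Matrix.of fun i j : Fin n => (x i.succ - y j.succ)⁻¹) := by
      rw [Matrix.det_succ_row_zero, Fin.sum_univ_succ]
      simp only [hF, Matrix.of_apply, Fin.cons_zero, Fin.cons_succ, Matrix.submatrix_apply,
        Fin.succAbove_zero, zero_mul, mul_zero, Finset.sum_const_zero, add_zero, Fin.val_zero,
        pow_zero, one_mul, mul_one]
      congr 1
    rw [step1, step2, step3, step4, ih (fun i => x i.succ) (fun j => y j.succ) h']
    simp_rw [Fin.prod_univ_succ, Fin.prod_Ioi_zero, Fin.prod_Ioi_succ]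
    simp only [Finset.prod_mul_distrib, Finset.prod_inv_distrib, div_eq_mul_inv, mul_inv]
    ring


lemma prod_erase_pairs {M : ℕ} (F : Fin M → Fin M → ℂ) :
    ∏ i, ∏ j ∈ univ.erase i, F i j = ∏ i, ∏ j ∈ Ioi i, (F i j * F j i) := by
  have hsplit : ∀ i : Fin M, univ.erase i = Ioi i ∪ Iio i := by
    intro i
    ext j
    simp only [mem_erase, mem_univ, and_true, mem_union, mem_Ioi, mem_Iio]
    constructor
    · intro h; rcases lt_or_gt_of_ne h with h' | h'
      · exact Or.inr h'
      · exact Or.inl h'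
    · rintro (h | h)
      · exact ne_of_gt h
      · exact ne_of_lt h
  have hdisj : ∀ i : Fin M, Disjoint (Ioi i) (Iio i) := by
    intro i
    rw [Finset.disjoint_left]
    intro a ha hb
    exact absurd (lt_trans (mem_Iio.mp hb) (mem_Ioi.mp ha)) (lt_irrefl a)
  calc ∏ i, ∏ j ∈ univ.erase i, F i j
      = ∏ i, ((∏ j ∈ Ioi i, F i j) * ∏ j ∈ Iio i, F i j) := by
        refine prod_congr rfl fun i _ => ?_
        rw [hsplit i, prod_union (hdisj i)]
    _ = (∏ i, ∏ j ∈ Ioi i, F i j) * ∏ i, ∏ j ∈ Iio i, F i j := prod_mul_distrib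
    _ = (∏ i, ∏ j ∈ Ioi i, F i j) * ∏ i, ∏ j ∈ Ioi i, F j i := by
        congr 1
        exact prod_comm' fun i j => by simp [and_comm]
    _ = ∏ i, ∏ j ∈ Ioi i, (F i j * F j i) := by
        rw [← prod_mul_distrib]
        exact prod_congr rfl fun i _ => prod_mul_distrib.symm

lemma prod_univ_pairs {M : ℕ} (F : Fin M → Fin M → ℂ) :
    ∏ i, ∏ j, F i j = (∏ i, F i i) * ∏ i, ∏ j ∈ Ioi i, (F i j * F j i) := by
  rw [← prod_erase_pairs, ← prod_mul_distrib]
  exact prod_congr rfl fun i _ => (Finset.mul_prod_erase univ (F i) (mem_univ i)).symm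


lemma sinh_factor (s t c : ℝ) :
    Complex.exp ((c:ℝ):ℂ) * (Complex.exp (s:ℂ) * Complex.exp (s:ℂ)
      - Complex.exp ((-(2*c):ℝ):ℂ) * (Complex.exp (t:ℂ) * Complex.exp (t:ℂ)))
    = 2 * Complex.exp (s:ℂ) * Complex.exp (t:ℂ) * (Real.sinh (s - t + c) : ℂ) := by
  rw [Complex.ofReal_sinh]
  simp only [Complex.sinh]
  push_cast
  field_simp
  ring_nf
  simp only [← Complex.exp_nat_mul, ← Complex.exp_add]
  ring_nf

lemma pair_aux' (s t c : ℝ)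
    (h0 : Real.sinh (s - t) ≠ 0)
    (h1 : Real.sinh (s - t + c) ≠ 0)
    (h2 : Real.sinh (t - s + c) ≠ 0) :
    (Complex.exp (s:ℂ) * Complex.exp (s:ℂ) - Complex.exp (t:ℂ) * Complex.exp (t:ℂ))
      * (Complex.exp ((-(2*c):ℝ):ℂ) * (Complex.exp (t:ℂ) * Complex.exp (t:ℂ))
          - Complex.exp ((-(2*c):ℝ):ℂ) * (Complex.exp (s:ℂ) * Complex.exp (s:ℂ)))
      * (1 - (Real.sinh c : ℂ)^2 / (Real.sinh (s - t) : ℂ)^2)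
    = (Complex.exp (s:ℂ) * Complex.exp (s:ℂ)
            - Complex.exp ((-(2*c):ℝ):ℂ) * (Complex.exp (t:ℂ) * Complex.exp (t:ℂ)))
        * (Complex.exp (t:ℂ) * Complex.exp (t:ℂ)
            - Complex.exp ((-(2*c):ℝ):ℂ) * (Complex.exp (s:ℂ) * Complex.exp (s:ℂ))) := by
  have hw := Complex.exp_ne_zero ((c:ℝ):ℂ)
  have hA : Complex.exp (s:ℂ) * Complex.exp (s:ℂ)
      - Complex.exp ((-(2*c):ℝ):ℂ) * (Complex.exp (t:ℂ) * Complex.exp (t:ℂ)) ≠ 0 := by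
    intro hX
    have := sinh_factor s t c
    rw [hX, mul_zero] at this
    exact (mul_ne_zero (mul_ne_zero (mul_ne_zero two_ne_zero (Complex.exp_ne_zero _))
      (Complex.exp_ne_zero _)) (Complex.ofReal_ne_zero.mpr h1)) this.symm
  have hB : Complex.exp (t:ℂ) * Complex.exp (t:ℂ)
      - Complex.exp ((-(2*c):ℝ):ℂ) * (Complex.exp (s:ℂ) * Complex.exp (s:ℂ)) ≠ 0 := by
    intro hX
    have := sinh_factor t s c
    rw [hX, mul_zero] at this
    exact (mul_ne_zero (mul_ne_zero (mul_ne_zero two_ne_zero (Complex.exp_ne_zero _))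
      (Complex.exp_ne_zero _)) (Complex.ofReal_ne_zero.mpr h2)) this.symm
  have h0' : (Real.sinh (s - t) : ℂ) ≠ 0 := Complex.ofReal_ne_zero.mpr h0
  have hsa : (Real.sinh (s - t) : ℂ) * (2 * Complex.exp (s:ℂ) * Complex.exp (t:ℂ))
      = Complex.exp (s:ℂ) * Complex.exp (s:ℂ) - Complex.exp (t:ℂ) * Complex.exp (t:ℂ) := by
    rw [Complex.ofReal_sinh]
    simp only [Complex.sinh]
    push_cast
    field_simp
    ring_nf
    simp only [← Complex.exp_nat_mul, ← Complex.exp_add]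
    ring_nf
  have hsc : (Real.sinh c : ℂ) * (2 * Complex.exp ((c:ℝ):ℂ))
      = Complex.exp ((c:ℝ):ℂ) * Complex.exp ((c:ℝ):ℂ) - 1 := by
    rw [Complex.ofReal_sinh]
    simp only [Complex.sinh]
    push_cast
    field_simp
    ring_nf
    simp only [← Complex.exp_nat_mul, ← Complex.exp_add]
    simp [← Complex.exp_add]
  have ha := Complex.exp_ne_zero ((s:ℝ):ℂ)
  have hb := Complex.exp_ne_zero ((t:ℝ):ℂ)
  have hab : Complex.exp (s:ℂ) * Complex.exp (s:ℂ) - Complex.exp (t:ℂ) * Complex.exp (t:ℂ) ≠ 0 := by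
    rw [← hsa]
    exact mul_ne_zero h0' (by simp [Complex.exp_ne_zero])
  have elam : Complex.exp ((-(2*c):ℝ):ℂ)
      = (Complex.exp ((c:ℝ):ℂ) * Complex.exp ((c:ℝ):ℂ))⁻¹ := by
    rw [← Complex.exp_add, ← Complex.exp_neg]
    push_cast
    ring_nf
  have esa : (Real.sinh (s - t) : ℂ)
      = (Complex.exp (s:ℂ) * Complex.exp (s:ℂ) - Complex.exp (t:ℂ) * Complex.exp (t:ℂ))
        / (2 * Complex.exp (s:ℂ) * Complex.exp (t:ℂ)) := by
    rw [eq_div_iff (by simp [Complex.exp_ne_zero])]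
    exact hsa
  have esc : (Real.sinh c : ℂ)
      = (Complex.exp ((c:ℝ):ℂ) * Complex.exp ((c:ℝ):ℂ) - 1) / (2 * Complex.exp ((c:ℝ):ℂ)) := by
    rw [eq_div_iff (by simp [Complex.exp_ne_zero])]
    linear_combination hsc
  rw [esa, esc, elam]
  have hab' : Complex.exp (s:ℂ) ^ 2 - Complex.exp (t:ℂ) ^ 2 ≠ 0 := by rw [sq, sq]; exact hab
  field_simp
  ring

lemma cdet (m : ℕ) (γ ν : ℝ) (Q : Fin m → ℝ)
    (hs : ∀ i j, i ≠ j → Real.sinh (ν * (Q i - Q j) / 2) ≠ 0)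
    (hc : ∀ i j, Real.sinh (ν * (Q i - Q j) / 2 + γ) ≠ 0) :
    Matrix.det (Matrix.of fun i j : Fin m =>
        ((Real.sinh γ / Real.sinh (ν * (Q i - Q j) / 2 + γ) : ℝ) : ℂ))
      * ∏ i, ∏ j ∈ Ioi i,
          ((1:ℂ) - (Real.sinh γ : ℂ)^2 / (Real.sinh (ν * (Q i - Q j) / 2) : ℂ)^2) = 1 := by
  rcases Nat.eq_zero_or_pos m with hm | hm
  · subst hm
    rw [Matrix.det_eq_one_of_card_eq_zero (Fintype.card_fin 0)]
    simp
  set u : Fin m → ℂ := fun i => Complex.exp ((ν * Q i / 2 : ℝ) : ℂ) with hu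
  set lam : ℂ := Complex.exp ((-(2*γ) : ℝ) : ℂ) with hlam
  set w : ℂ := Complex.exp ((γ : ℝ) : ℂ) with hw
  have hwne : w ≠ 0 := Complex.exp_ne_zero _
  have hune : ∀ i, u i ≠ 0 := fun i => Complex.exp_ne_zero _
  -- factorization of the Cauchy denominators
  have hfac : ∀ i j, w * (u i * u i - lam * (u j * u j))
      = 2 * u i * u j * (Real.sinh (ν * (Q i - Q j) / 2 + γ) : ℂ) := by
    intro i j
    have := sinh_factor (ν * Q i / 2) (ν * Q j / 2) γ
    rw [show ν * Q i / 2 - ν * Q j / 2 + γ = ν * (Q i - Q j) / 2 + γ from by ring] at this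
    exact this
  have hne : ∀ i j, u i * u i - lam * (u j * u j) ≠ 0 := by
    intro i j
    intro hX
    have h2 := hfac i j
    rw [hX, mul_zero] at h2
    exact (mul_ne_zero (mul_ne_zero (mul_ne_zero two_ne_zero (hune i)) (hune j))
      (Complex.ofReal_ne_zero.mpr (hc i j))) h2.symm
  -- sinh γ in terms of w
  have hsc : (Real.sinh γ : ℂ) * (2 * w) = w * w - 1 := by
    rw [Complex.ofReal_sinh]
    simp only [Complex.sinh]
    field_simp
    ring_nf
    simp only [hw, sq, ← Complex.exp_add, neg_add_cancel, add_neg_cancel, Complex.exp_zero]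
    ring
  -- the matrix entries factor
  have hentry : ∀ i j, ((Real.sinh γ / Real.sinh (ν * (Q i - Q j) / 2 + γ) : ℝ) : ℂ)
      = ((1 - lam) * u i) * (u j * (u i * u i - lam * (u j * u j))⁻¹) := by
    intro i j
    have he : (Real.sinh (ν * (Q i - Q j) / 2 + γ) : ℂ)
        = w * (u i * u i - lam * (u j * u j)) / (2 * u i * u j) := by
      rw [eq_div_iff (by simp [hune i, hune j])]
      linear_combination -hfac i j
    have hescg : (Real.sinh γ : ℂ) = (w * w - 1) / (2 * w) := by
      rw [eq_div_iff (by simp [hwne])]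
      exact hsc
    have helam : lam = (w * w)⁻¹ := by
      rw [hlam, hw, ← Complex.exp_add, ← Complex.exp_neg]
      push_cast
      ring_nf
    rw [Complex.ofReal_div, he, hescg, helam]
    have hD := hne i j
    rw [helam] at hD
    have hD2 : (-(w ^ 2 * u j ^ 2) + w ^ 4 * u i ^ 2) ≠ 0 := by
      have he2 : -(w ^ 2 * u j ^ 2) + w ^ 4 * u i ^ 2
          = (w * w) * ((w * w) * (u i * u i - (w * w)⁻¹ * (u j * u j))) := by
        field_simp
        ring
      rw [he2]
      exact mul_ne_zero (mul_ne_zero hwne hwne)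
        (mul_ne_zero (mul_ne_zero hwne hwne) hD)
    have hE : u i * u i * (w * w) - u j * u j ≠ 0 := by
      have heq : u i * u i * (w * w) - u j * u j
          = (w * w) * (u i * u i - (w * w)⁻¹ * (u j * u j)) := by
        field_simp
      rw [heq]
      exact mul_ne_zero (mul_ne_zero hwne hwne) hD
    field_simp [hune i, hune j, hwne, hD, hD2, hE]
  -- rewrite the determinant
  have hCdef : (Matrix.of fun i j : Fin m =>
        ((Real.sinh γ / Real.sinh (ν * (Q i - Q j) / 2 + γ) : ℝ) : ℂ))
      = Matrix.of (fun i j => (fun i => (1 - lam) * u i) i *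
          (Matrix.of (fun i j : Fin m => (fun j => u j) j *
            (Matrix.of fun i j : Fin m =>
              ((fun i => u i * u i) i - (fun j => lam * (u j * u j)) j)⁻¹) i j)) i j) := by
    ext i j
    simp only [Matrix.of_apply]
    exact hentry i j
  rw [hCdef, Matrix.det_mul_column, Matrix.det_mul_row,
    cauchy_det_aux m (fun i => u i * u i) (fun j => lam * (u j * u j)) hne,
    prod_univ_pairs (fun i j => u i * u i - lam * (u j * u j))]
  -- clean up the diagonal
  have hdiag : (∏ i, ((1 - lam) * u i)) * ((∏ i, u i) *
      ((∏ i, ∏ j ∈ Ioi i, ((u i * u i - u j * u j) * (lam * (u j * u j) - lam * (u i * u i)))) /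
        ((∏ i, (u i * u i - lam * (u i * u i))) *
          ∏ i, ∏ j ∈ Ioi i, ((u i * u i - lam * (u j * u j)) * (u j * u j - lam * (u i * u i))))))
      * ∏ i, ∏ j ∈ Ioi i,
          ((1:ℂ) - (Real.sinh γ : ℂ)^2 / (Real.sinh (ν * (Q i - Q j) / 2) : ℂ)^2) = 1 := by
    have hXeq : (∏ i, ((1 - lam) * u i)) * (∏ i, u i)
        = ∏ i, (u i * u i - lam * (u i * u i)) := by
      rw [← prod_mul_distrib]
      exact prod_congr rfl fun i _ => by ring
    have hX : (∏ i, (u i * u i - lam * (u i * u i))) ≠ 0 :=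
      prod_ne_zero_iff.mpr fun i _ => hne i i
    have hPD : (∏ i, ∏ j ∈ Ioi i, ((u i * u i - lam * (u j * u j))
        * (u j * u j - lam * (u i * u i)))) ≠ 0 :=
      prod_ne_zero_iff.mpr fun i _ => prod_ne_zero_iff.mpr fun j _ =>
        mul_ne_zero (hne i j) (hne j i)
    have hkey : (∏ i, ∏ j ∈ Ioi i, ((u i * u i - u j * u j)
          * (lam * (u j * u j) - lam * (u i * u i))))
        * (∏ i, ∏ j ∈ Ioi i,
            ((1:ℂ) - (Real.sinh γ : ℂ)^2 / (Real.sinh (ν * (Q i - Q j) / 2) : ℂ)^2))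
      = ∏ i, ∏ j ∈ Ioi i, ((u i * u i - lam * (u j * u j)) * (u j * u j - lam * (u i * u i))) := by
      rw [← prod_mul_distrib]
      refine prod_congr rfl fun i _ => ?_
      rw [← prod_mul_distrib]
      refine prod_congr rfl fun j hj => ?_
      have hij : i ≠ j := ne_of_lt (mem_Ioi.mp hj)
      have h0 : Real.sinh (ν * Q i / 2 - ν * Q j / 2) ≠ 0 := by
        rw [show ν * Q i / 2 - ν * Q j / 2 = ν * (Q i - Q j) / 2 from by ring]
        exact hs i j hij
      have h1 : Real.sinh (ν * Q i / 2 - ν * Q j / 2 + γ) ≠ 0 := by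
        rw [show ν * Q i / 2 - ν * Q j / 2 + γ = ν * (Q i - Q j) / 2 + γ from by ring]
        exact hc i j
      have h2 : Real.sinh (ν * Q j / 2 - ν * Q i / 2 + γ) ≠ 0 := by
        rw [show ν * Q j / 2 - ν * Q i / 2 + γ = ν * (Q j - Q i) / 2 + γ from by ring]
        exact hc j i
      have := pair_aux' (ν * Q i / 2) (ν * Q j / 2) γ h0 h1 h2
      rw [show ν * Q i / 2 - ν * Q j / 2 = ν * (Q i - Q j) / 2 from by ring] at this
      exact this
    rw [show (∏ i, ((1 - lam) * u i)) * ((∏ i, u i) *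
        ((∏ i, ∏ j ∈ Ioi i, ((u i * u i - u j * u j) * (lam * (u j * u j) - lam * (u i * u i)))) /
          ((∏ i, (u i * u i - lam * (u i * u i))) *
            ∏ i, ∏ j ∈ Ioi i, ((u i * u i - lam * (u j * u j)) * (u j * u j - lam * (u i * u i))))))
        * ∏ i, ∏ j ∈ Ioi i,
            ((1:ℂ) - (Real.sinh γ : ℂ)^2 / (Real.sinh (ν * (Q i - Q j) / 2) : ℂ)^2)
      = ((∏ i, ((1 - lam) * u i)) * (∏ i, u i)) *
          (((∏ i, ∏ j ∈ Ioi i, ((u i * u i - u j * u j) * (lam * (u j * u j) - lam * (u i * u i))))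
            * ∏ i, ∏ j ∈ Ioi i,
              ((1:ℂ) - (Real.sinh γ : ℂ)^2 / (Real.sinh (ν * (Q i - Q j) / 2) : ℂ)^2))
          / ((∏ i, (u i * u i - lam * (u i * u i))) *
            ∏ i, ∏ j ∈ Ioi i, ((u i * u i - lam * (u j * u j)) * (u j * u j - lam * (u i * u i)))))
      from by ring, hXeq, hkey, mul_div_assoc', div_self (mul_ne_zero hX hPD)]
  exact hdiag

end RSHelpers

open RSHelpers in
/-- Product formula for the principal minors of the A_{2N} Ruijsenaars–Schneider
Lax matrix: `m_𝒥(ℒ) = e^{-β Σ_{j∈𝒥} θ_j} ∏_{j∈𝒥, k∉𝒥} f^{1/2}(q_j - q_k)`,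
where `f^{1/2}` is a consistent (even) choice of square root of `f`. -/
theorem stmt_10 (N : ℕ) (β γ ν : ℝ) (q θ : Fin (2 * N + 1) → ℝ)
    (hs : ∀ i j, i ≠ j → Real.sinh (ν * (q i - q j) / 2) ≠ 0)
    (hc : ∀ i j, Real.sinh (ν * (q i - q j) / 2 + γ) ≠ 0)
    (fh : ℝ → ℂ)
    (hfh : ∀ i j, i ≠ j → (fh (q i - q j)) ^ 2
      = 1 - (Real.sinh γ : ℂ) ^ 2 / (Real.sinh (ν * (q i - q j) / 2) : ℂ) ^ 2)
    (hfe : ∀ x : ℝ, fh (-x) = fh x)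
    (L : Matrix (Fin (2 * N + 1)) (Fin (2 * N + 1)) ℂ)
    (hL : ∀ i j, L i j
      = ((Real.sinh γ / Real.sinh (ν * (q i - q j) / 2 + γ) : ℝ) : ℂ)
          * Complex.exp (-(β * θ j : ℝ))
          * ∏ k ∈ univ.erase j, fh (q j - q k)) :
    ∀ 𝒥 : Finset (Fin (2 * N + 1)),
      (L.submatrix (fun a : ↥𝒥 => (a : Fin (2 * N + 1)))
          (fun a : ↥𝒥 => (a : Fin (2 * N + 1)))).det
        = Complex.exp (-(β * ∑ j ∈ 𝒥, θ j : ℝ))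
            * ∏ j ∈ 𝒥, ∏ k ∈ 𝒥ᶜ, fh (q j - q k) := by
  intro 𝒥
  classical
  set m := 𝒥.card with hm
  set g : Fin m → Fin (2 * N + 1) := fun i => ((𝒥.orderIsoOfFin rfl i : ↥𝒥) : Fin (2 * N + 1))
    with hgdef
  have hginj : Function.Injective g :=
    fun a b hab => (𝒥.orderIsoOfFin rfl).injective (Subtype.coe_injective hab)
  have hgmem : ∀ i, g i ∈ 𝒥 := fun i => (𝒥.orderIsoOfFin rfl i).2
  have himg : Finset.image g univ = 𝒥 := by
    ext x
    simp only [Finset.mem_image, Finset.mem_univ, true_and]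
    constructor
    · rintro ⟨i, rfl⟩; exact hgmem i
    · intro hx
      refine ⟨(𝒥.orderIsoOfFin rfl).symm ⟨x, hx⟩, ?_⟩
      show ((𝒥.orderIsoOfFin rfl) ((𝒥.orderIsoOfFin rfl).symm ⟨x, hx⟩) : Fin (2 * N + 1)) = x
      rw [OrderIso.apply_symm_apply]
  -- reindex the determinant
  have hdet0 : (L.submatrix (fun a : ↥𝒥 => (a : Fin (2 * N + 1)))
        (fun a : ↥𝒥 => (a : Fin (2 * N + 1)))).det
      = (Matrix.of fun i j : Fin m => L (g i) (g j)).det := by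
    rw [← Matrix.det_submatrix_equiv_self (𝒥.orderIsoOfFin rfl).toEquiv
      (L.submatrix (fun a : ↥𝒥 => (a : Fin (2 * N + 1)))
        (fun a : ↥𝒥 => (a : Fin (2 * N + 1))))]
    rfl
  set dd : Fin (2 * N + 1) → ℂ := fun k => Complex.exp (-(β * θ k : ℝ))
      * ∏ k' ∈ univ.erase k, fh (q k - q k') with hdd
  set C : Matrix (Fin m) (Fin m) ℂ := Matrix.of fun i j : Fin m =>
      ((Real.sinh γ / Real.sinh (ν * (q (g i) - q (g j)) / 2 + γ) : ℝ) : ℂ) with hC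
  have hsplit : (Matrix.of fun i j : Fin m => L (g i) (g j))
      = Matrix.of (fun i j : Fin m => (fun j => dd (g j)) j * C i j) := by
    ext i j
    simp only [Matrix.of_apply, hC, hdd]
    rw [hL]
    ring
  rw [hdet0, hsplit, Matrix.det_mul_row (fun j => dd (g j)) C]
  -- the determinant of C
  have hkey := cdet m γ ν (fun i => q (g i))
    (fun i j hij => hs (g i) (g j) (fun h => hij (hginj h)))
    (fun i j => hc (g i) (g j))
  -- the fh pair products
  have hfhpair : ∏ i, ∏ j ∈ Ioi i, (fh (q (g i) - q (g j)) * fh (q (g j) - q (g i)))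
      = ∏ i, ∏ j ∈ Ioi i,
          ((1:ℂ) - (Real.sinh γ : ℂ)^2 / (Real.sinh (ν * (q (g i) - q (g j)) / 2) : ℂ)^2) := by
    refine prod_congr rfl fun i _ => prod_congr rfl fun j hj => ?_
    have hij : g i ≠ g j := fun h => (ne_of_lt (mem_Ioi.mp hj)) (hginj h)
    rw [show q (g j) - q (g i) = -(q (g i) - q (g j)) from by ring, hfe, ← sq]
    exact hfh (g i) (g j) hij
  -- the product of the dd's
  have hprodd : ∏ j, dd (g j)
      = Complex.exp (-(β * ∑ j ∈ 𝒥, θ j : ℝ))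
        * ((∏ i, ∏ j ∈ Ioi i, (fh (q (g i) - q (g j)) * fh (q (g j) - q (g i))))
          * ∏ j ∈ 𝒥, ∏ k ∈ 𝒥ᶜ, fh (q j - q k)) := by
    rw [prod_mul_distrib]
    congr 1
    · rw [← Complex.exp_sum]
      congr 1
      have hsumC : ∑ j ∈ 𝒥, (θ j : ℂ) = ∑ j : Fin m, (θ (g j) : ℂ) := by
        rw [← himg, Finset.sum_image (fun a _ b _ h => hginj h)]
      push_cast
      rw [hsumC, Finset.mul_sum]
      simp
    · -- split each inner product over 𝒥.erase (g j) and 𝒥ᶜ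
      have herase : ∀ j : Fin m, univ.erase (g j) = (𝒥.erase (g j)) ∪ 𝒥ᶜ := by
        intro j
        ext x
        simp only [mem_erase, mem_univ, and_true, mem_union, mem_compl]
        constructor
        · intro hx
          by_cases hmem : x ∈ 𝒥
          · exact Or.inl ⟨hx, hmem⟩
          · exact Or.inr hmem
        · rintro (⟨h1, _⟩ | h)
          · exact h1
          · exact fun e => h (e ▸ hgmem j)
      have hdisj : ∀ j : Fin m, Disjoint (𝒥.erase (g j)) 𝒥ᶜ := by
        intro j
        rw [Finset.disjoint_left]
        intro a ha hb
        exact (mem_compl.mp hb) (mem_of_mem_erase ha)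
      calc ∏ j, ∏ k ∈ univ.erase (g j), fh (q (g j) - q k)
          = ∏ j, ((∏ k ∈ 𝒥.erase (g j), fh (q (g j) - q k))
              * ∏ k ∈ 𝒥ᶜ, fh (q (g j) - q k)) := by
            refine prod_congr rfl fun j _ => ?_
            rw [herase j, prod_union (hdisj j)]
        _ = (∏ j, ∏ k ∈ 𝒥.erase (g j), fh (q (g j) - q k))
              * ∏ j, ∏ k ∈ 𝒥ᶜ, fh (q (g j) - q k) := prod_mul_distrib
        _ = (∏ i, ∏ j ∈ Ioi i, (fh (q (g i) - q (g j)) * fh (q (g j) - q (g i))))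
              * ∏ j ∈ 𝒥, ∏ k ∈ 𝒥ᶜ, fh (q j - q k) := by
            congr 1
            · rw [← prod_erase_pairs (fun i j => fh (q (g i) - q (g j)))]
              refine prod_congr rfl fun j _ => ?_
              rw [show 𝒥.erase (g j) = Finset.image g (univ.erase j) from by
                  rw [Finset.image_erase hginj, himg],
                Finset.prod_image (fun a _ b _ h => hginj h)]
            · rw [← himg, Finset.prod_image (fun a _ b _ h => hginj h)]
  rw [hprodd, hfhpair]
  have hkey2 : C.det * ∏ i, ∏ j ∈ Ioi i,
      ((1:ℂ) - (Real.sinh γ : ℂ)^2 / (Real.sinh (ν * (q (g i) - q (g j)) / 2) : ℂ)^2) = 1 := hkey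
  linear_combination (Complex.exp (-(β * ∑ j ∈ 𝒥, θ j : ℝ))
      * ∏ j ∈ 𝒥, ∏ k ∈ 𝒥ᶜ, fh (q j - q k)) * hkey2
end

section
/- First-order relation between potentials: with v(q) = sinh(νq/2 + γ)/sinh(νq/2), 𝒜_K = K ∪ (−K) ∪ {0} for finite K ⊂ {1,...,N} with folded variables (q_{−k} = −q_k, q_0 = 0), U_{K,1} = −Σ_{i∈𝒜_K∖{0}} Π_{k∈𝒜_K, k≠i} v(q_i − q_k) and 𝒰_{K,1} = Π_{k∈𝒜_K, k≠0} v(q_k) satisfy U_{K,1} = 𝒰_{K,1} − sinh(γ(2|K|+1))/sinh γ. -/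
open Finset Polynomial

lemma coeff_sum_aux {ι : Type*} [DecidableEq ι] (s : Finset ι) (z : ι → ℝ)
    (hinj : Set.InjOn z s) (f : Polynomial ℝ) (hdeg : f.degree < s.card) :
    ∑ i ∈ s, f.eval (z i) * Lagrange.nodalWeight s z i = f.coeff (s.card - 1) := by
  conv_rhs => rw [Lagrange.eq_interpolate hinj hdeg]
  rw [Lagrange.interpolate_apply, Polynomial.finset_sum_coeff]
  refine Finset.sum_congr rfl fun i hi => ?_
  rw [Polynomial.coeff_C_mul]
  congr 1
  have hdb : (Lagrange.basis s z i).natDegree = s.card - 1 :=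
    Lagrange.natDegree_basis hinj hi
  rw [← hdb, ← Polynomial.leadingCoeff, Lagrange.basis, Polynomial.leadingCoeff_prod,
    Lagrange.nodalWeight]
  refine Finset.prod_congr rfl fun j hj => ?_
  rw [Lagrange.basisDivisor, Polynomial.leadingCoeff_mul, Polynomial.leadingCoeff_C,
    (Polynomial.monic_X_sub_C _).leadingCoeff, mul_one]

lemma key_sum_s13 {ι : Type*} [DecidableEq ι] (s : Finset ι) (hne : s.Nonempty) (z : ι → ℝ)
    (hinj : Set.InjOn z s) (hz : ∀ i ∈ s, z i ≠ 0) (t : ℝ) (ht : t ≠ 0)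
    (htt : t - t⁻¹ ≠ 0) :
    ∑ i ∈ s, ∏ k ∈ s.erase i, ((t * z i - t⁻¹ * z k) / (z i - z k))
      = (t ^ s.card - t⁻¹ ^ s.card) / (t - t⁻¹) := by
  have hn1 : 1 ≤ s.card := Finset.card_pos.mpr hne
  set u : ι → ℝ := fun k => t⁻¹ * (t⁻¹ * z k) with hu
  set P : Polynomial ℝ := C (t ^ s.card) * Lagrange.nodal s u with hP
  set Nz : Polynomial ℝ := Lagrange.nodal s z with hNz
  set g : Polynomial ℝ := P.divX - C (t⁻¹ ^ s.card) * Nz.divX with hg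
  have htn : t ^ s.card ≠ 0 := pow_ne_zero _ ht
  have htn' : t⁻¹ ^ s.card ≠ 0 := pow_ne_zero _ (inv_ne_zero ht)
  have hPne : P ≠ 0 := mul_ne_zero (by simpa using htn) Lagrange.nodal_ne_zero
  have hNzne : Nz ≠ 0 := Lagrange.nodal_ne_zero
  have hdegP : P.degree = (s.card : ℕ) := by
    rw [hP, Polynomial.degree_C_mul htn, Lagrange.degree_nodal]
  have hdegNz : Nz.degree = (s.card : ℕ) := Lagrange.degree_nodal
  have hdg : g.degree < (s.card : ℕ) := by
    refine lt_of_le_of_lt (Polynomial.degree_sub_le _ _) (max_lt ?_ ?_)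
    · exact hdegP ▸ Polynomial.degree_divX_lt hPne
    · rw [Polynomial.degree_C_mul htn']
      exact hdegNz ▸ Polynomial.degree_divX_lt hNzne
  have hPcn : P.coeff s.card = t ^ s.card := by
    have hd : (Lagrange.nodal s u).natDegree = s.card := Lagrange.natDegree_nodal
    rw [hP, Polynomial.coeff_C_mul, ← hd,
      (Lagrange.nodal_monic (s := s) (v := u)).coeff_natDegree, mul_one]
  have hNzcn : Nz.coeff s.card = 1 := by
    have hd : (Lagrange.nodal s z).natDegree = s.card := Lagrange.natDegree_nodal
    rw [hNz, ← hd, (Lagrange.nodal_monic (s := s) (v := z)).coeff_natDegree]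
  have hgc : g.coeff (s.card - 1) = t ^ s.card - t⁻¹ ^ s.card := by
    rw [hg, Polynomial.coeff_sub, Polynomial.coeff_C_mul, Polynomial.coeff_divX,
      Polynomial.coeff_divX, Nat.sub_add_cancel hn1, hPcn, hNzcn, mul_one]
  have hc0 : P.coeff 0 = t⁻¹ ^ s.card * Nz.coeff 0 := by
    rw [hP, Polynomial.coeff_C_mul, Polynomial.coeff_zero_eq_eval_zero,
      Polynomial.coeff_zero_eq_eval_zero, Lagrange.eval_nodal, Lagrange.eval_nodal,
      ← Finset.prod_const (b := t), ← Finset.prod_mul_distrib,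
      ← Finset.prod_const (b := t⁻¹), ← Finset.prod_mul_distrib]
    refine Finset.prod_congr rfl fun k _ => ?_
    simp only [hu]
    field_simp
    ring
  have h2 : ∀ p : Polynomial ℝ, ∀ x : ℝ, x * (p.divX.eval x) + p.coeff 0 = p.eval x := by
    intro p x
    conv_rhs => rw [← Polynomial.X_mul_divX_add (p := p)]
    rw [Polynomial.eval_add, Polynomial.eval_mul, Polynomial.eval_X, Polynomial.eval_C]
  have hgev : ∀ i ∈ s, g.eval (z i) * z i = P.eval (z i) := by
    intro i hi
    have h1 : Nz.eval (z i) = 0 := Lagrange.eval_nodal_at_node hi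
    have h3 := h2 P (z i)
    have h4 := h2 Nz (z i)
    rw [h1] at h4
    rw [hg]
    simp only [Polynomial.eval_sub, Polynomial.eval_mul, Polynomial.eval_C]
    linear_combination h3 - t⁻¹ ^ s.card * h4 - hc0
  have hterm : ∀ i ∈ s, ∏ k ∈ s.erase i, ((t * z i - t⁻¹ * z k) / (z i - z k))
      = (t - t⁻¹)⁻¹ * (g.eval (z i) * Lagrange.nodalWeight s z i) := by
    intro i hi
    have hzi := hz i hi
    have hPev : P.eval (z i) = ((t - t⁻¹) * z i) * ∏ k ∈ s.erase i, (t * z i - t⁻¹ * z k) := by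
      rw [hP, Polynomial.eval_mul, Polynomial.eval_C, Lagrange.eval_nodal,
        ← Finset.prod_const (b := t), ← Finset.prod_mul_distrib]
      have hcg : ∀ k ∈ s, t * (z i - u k) = t * z i - t⁻¹ * z k := by
        intro k _
        simp only [hu]
        field_simp
      rw [Finset.prod_congr rfl hcg, ← Finset.mul_prod_erase _ _ hi]
      congr 1
      field_simp
    have h5 : g.eval (z i) * z i
        = ((t - t⁻¹) * ∏ k ∈ s.erase i, (t * z i - t⁻¹ * z k)) * z i := by
      rw [hgev i hi, hPev]; ring
    have hge := mul_right_cancel₀ hzi h5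
    rw [hge]
    simp only [div_eq_mul_inv]
    rw [Finset.prod_mul_distrib, Lagrange.nodalWeight, ← mul_assoc, ← mul_assoc,
      inv_mul_cancel₀ htt, one_mul]
  rw [Finset.sum_congr rfl hterm, ← Finset.mul_sum, coeff_sum_aux s z hinj g hdg, hgc,
    inv_mul_eq_div]

lemma sinh_ratio (γ a b : ℝ) :
    Real.sinh ((a - b) / 2 + γ) / Real.sinh ((a - b) / 2)
      = (Real.exp γ * Real.exp a - (Real.exp γ)⁻¹ * Real.exp b) / (Real.exp a - Real.exp b) := by
  have hden : Real.exp a - Real.exp b = Real.exp ((a + b) / 2) * (2 * Real.sinh ((a - b) / 2)) := by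
    rw [Real.sinh_eq]
    have h1 : Real.exp ((a+b)/2) * Real.exp ((a-b)/2) = Real.exp a := by
      rw [← Real.exp_add]; congr 1; ring
    have h2 : Real.exp ((a+b)/2) * Real.exp (-((a-b)/2)) = Real.exp b := by
      rw [← Real.exp_add]; congr 1; ring
    linear_combination h2 - h1
  have hnum : Real.exp γ * Real.exp a - (Real.exp γ)⁻¹ * Real.exp b
      = Real.exp ((a + b) / 2) * (2 * Real.sinh ((a - b) / 2 + γ)) := by
    rw [Real.sinh_eq]
    have h1 : Real.exp ((a+b)/2) * Real.exp ((a-b)/2 + γ) = Real.exp γ * Real.exp a := by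
      rw [← Real.exp_add, ← Real.exp_add]; congr 1; ring
    have h2 : Real.exp ((a+b)/2) * Real.exp (-((a-b)/2 + γ)) = (Real.exp γ)⁻¹ * Real.exp b := by
      rw [← Real.exp_neg, ← Real.exp_add, ← Real.exp_add]; congr 1; ring
    linear_combination h2 - h1
  rw [hnum, hden, mul_div_mul_left _ _ (Real.exp_ne_zero _),
    mul_div_mul_left _ _ (by norm_num : (2:ℝ) ≠ 0)]

/-- First-order relation between the Koornwinder–van Diejen potential `U_{K,1}`
and the folded trace potential `𝒰_{K,1}`:
`U_{K,1} = 𝒰_{K,1} - sinh(γ(2|K|+1))/sinh γ`. -/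
theorem stmt_13 (γ ν : ℝ) (q : ℤ → ℝ) (hq : ∀ i, q (-i) = - q i)
    (K : Finset ℤ) (hK : ∀ k ∈ K, 0 < k)
    (hγ : Real.sinh γ ≠ 0)
    (AK : Finset ℤ) (hAK : AK = K ∪ K.image (fun x => -x) ∪ {0})
    (hs : ∀ i ∈ AK, ∀ k ∈ AK, i ≠ k → Real.sinh (ν * (q i - q k) / 2) ≠ 0)
    (v : ℝ → ℝ) (hv : ∀ x, v x = Real.sinh (ν * x / 2 + γ) / Real.sinh (ν * x / 2)) :
    -∑ i ∈ AK.erase 0, ∏ k ∈ AK.erase i, v (q i - q k)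
      = (∏ k ∈ AK.erase 0, v (q k))
          - Real.sinh (γ * (2 * (K.card : ℝ) + 1)) / Real.sinh γ := by
  classical
  set t : ℝ := Real.exp γ with hT
  set z : ℤ → ℝ := fun i => Real.exp (ν * q i) with hz
  have hq0 : q 0 = 0 := by have := hq 0; simp at this; linarith
  have hmem : ∀ i : ℤ, i ∈ AK ↔ (i ∈ K ∨ -i ∈ K ∨ i = 0) := by
    intro i
    simp only [hAK, Finset.mem_union, Finset.mem_image, Finset.mem_singleton]
    constructor
    · rintro ((h | ⟨x, hx, rfl⟩) | h)
      · exact Or.inl h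
      · exact Or.inr (Or.inl (by simpa using hx))
      · exact Or.inr (Or.inr h)
    · rintro (h | h | h)
      · exact Or.inl (Or.inl h)
      · exact Or.inl (Or.inr ⟨-i, h, by ring⟩)
      · exact Or.inr h
  have h0A : (0:ℤ) ∈ AK := (hmem 0).mpr (Or.inr (Or.inr rfl))
  have hnegA : ∀ i ∈ AK, -i ∈ AK := by
    intro i hi
    rcases (hmem i).mp hi with h | h | h
    · exact (hmem (-i)).mpr (Or.inr (Or.inl (by simpa using h)))
    · exact (hmem (-i)).mpr (Or.inl h)
    · exact (hmem (-i)).mpr (Or.inr (Or.inr (by simp [h])))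
  have hinj : Set.InjOn z AK := by
    intro i hi j hj hij
    by_contra hne
    apply hs i hi j hj hne
    have : ν * q i = ν * q j := Real.exp_injective hij
    have h2 : ν * (q i - q j) / 2 = 0 := by ring_nf; linarith [this]
    rw [h2, Real.sinh_zero]
  have hzne : ∀ i ∈ AK, z i ≠ 0 := fun i _ => Real.exp_ne_zero _
  have ht : t ≠ 0 := Real.exp_ne_zero _
  have htinv : t⁻¹ = Real.exp (-γ) := by rw [hT, Real.exp_neg]
  have htt : t - t⁻¹ ≠ 0 := by
    intro h
    apply hγ
    have h2 : Real.exp γ = Real.exp (-γ) := by rw [htinv, hT] at h; linarith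
    rw [Real.sinh_eq, h2]
    simp
  -- cardinality
  have hcard : AK.card = 2 * K.card + 1 := by
    have d1 : Disjoint K (K.image (fun x => -x)) := by
      rw [Finset.disjoint_left]
      rintro a ha hb
      simp only [Finset.mem_image] at hb
      obtain ⟨x, hx, rfl⟩ := hb
      have := hK _ hx; have := hK _ ha; omega
    have d2 : Disjoint (K ∪ K.image (fun x => -x)) ({0} : Finset ℤ) := by
      simp only [Finset.disjoint_singleton_right, Finset.mem_union, Finset.mem_image]
      rintro (h | ⟨x, hx, hx0⟩)
      · exact absurd (hK _ h) (by omega)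
      · have := hK _ hx; omega
    rw [hAK, Finset.card_union_of_disjoint d2, Finset.card_union_of_disjoint d1,
      Finset.card_image_of_injective _ neg_injective, Finset.card_singleton]
    ring
  -- main sum identity
  have hne : AK.Nonempty := ⟨0, h0A⟩
  have hmain : ∑ i ∈ AK, ∏ k ∈ AK.erase i, v (q i - q k)
      = Real.sinh (γ * (2 * (K.card : ℝ) + 1)) / Real.sinh γ := by
    have hsum := key_sum_s13 AK hne z hinj hzne t ht htt
    have hrw : ∀ i ∈ AK, (∏ k ∈ AK.erase i, v (q i - q k))
        = ∏ k ∈ AK.erase i, ((t * z i - t⁻¹ * z k) / (z i - z k)) := by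
      intro i hi
      refine Finset.prod_congr rfl fun k hk => ?_
      obtain ⟨hki, hkA⟩ := Finset.mem_erase.mp hk
      rw [hv]
      have harg : ν * (q i - q k) / 2 = (ν * q i - ν * q k) / 2 := by ring
      rw [harg, sinh_ratio γ (ν * q i) (ν * q k)]
    rw [Finset.sum_congr rfl hrw, hsum]
    -- now convert (t^n - t⁻¹^n)/(t - t⁻¹) to sinh form
    have e1 : t ^ AK.card = Real.exp ((AK.card : ℝ) * γ) := by
      rw [hT, ← Real.exp_nat_mul]
    have e2 : t⁻¹ ^ AK.card = Real.exp (-((AK.card : ℝ) * γ)) := by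
      rw [htinv, ← Real.exp_nat_mul]
      congr 1; ring
    have hcast : (AK.card : ℝ) = 2 * (K.card : ℝ) + 1 := by
      rw [hcard]; push_cast; ring
    have e3 : γ * (2 * (K.card : ℝ) + 1) = (AK.card : ℝ) * γ := by rw [hcast]; ring
    rw [e1, e2, e3, Real.sinh_eq, Real.sinh_eq, hT, ← Real.exp_neg]
    have hd : Real.exp γ - Real.exp (-γ) ≠ 0 := by rw [← htinv, ← hT]; exact htt
    field_simp
  -- the i = 0 term
  have hT0 : ∏ k ∈ AK.erase 0, v (q 0 - q k) = ∏ k ∈ AK.erase 0, v (q k) := by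
    have step1 : ∀ k ∈ AK.erase 0, v (q 0 - q k) = v (q (-k)) := by
      intro k _
      rw [hq, hq0]; ring_nf
    rw [Finset.prod_congr rfl step1]
    refine Finset.prod_nbij' (fun k => -k) (fun k => -k) ?_ ?_ ?_ ?_ ?_
    · intro k hk
      obtain ⟨hk0, hkA⟩ := Finset.mem_erase.mp hk
      exact Finset.mem_erase.mpr ⟨neg_ne_zero.mpr hk0, hnegA k hkA⟩
    · intro k hk
      obtain ⟨hk0, hkA⟩ := Finset.mem_erase.mp hk
      exact Finset.mem_erase.mpr ⟨neg_ne_zero.mpr hk0, hnegA k hkA⟩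
    · intro k _; ring
    · intro k _; ring
    · intro k _; rfl
  -- assembly
  have hsplit : (∏ k ∈ AK.erase 0, v (q 0 - q k))
      + ∑ i ∈ AK.erase 0, ∏ k ∈ AK.erase i, v (q i - q k)
      = ∑ i ∈ AK, ∏ k ∈ AK.erase i, v (q i - q k) :=
    Finset.add_sum_erase AK (fun i => ∏ k ∈ AK.erase i, v (q i - q k)) h0A
  rw [hmain] at hsplit
  rw [hT0] at hsplit
  linarith
end
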